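/- In the multiple-default Cox model: for every n ∈ {0, 1, …, N−1} and every random variable Θ : Ω̃ → [0,∞] that is measurable with respect to 𝓕_∞ ∨ σ(E_1) ∨ … ∨ σ(E_n), one has P̃(τ_{n+1} = Θ) = 0. In particular, τ_{n+1} avoids every 𝔾^{(n)}-stopping time. -/

import Mathlib

/-!
Write `Λₖ(ω, t) = ∫₀ᵗ λ̃ᵏ_s(ω) ds`. For almost every `ω`, `Λₖ(ω, ·)` is a continuous nondecreasing
surjection `[0, ∞) → [0, ∞)`, so `τ̃ₖ` is the first time `Λₖ` reaches `Eₖ`, `Λₖ(τ̃ₖ) = Eₖ`, and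
`τ̃ₖ = ψₖ(ω, Eₖ)` for a jointly measurable inverse `ψₖ`. Hence on `{Θ = τₙ₊₁}`
`Eₙ₊₁ = Λₙ₊₁(ω, Θ - ∑_{k ≤ n} ψₖ(ω, Eₖ))`, and the right-hand side is `𝓕 ⊗ σ(E₁, …, Eₙ)`-measurable.
For fixed `ω` it is therefore independent of `Eₙ₊₁`, whose law has no atoms, so the event has
probability zero for every `ω`, and by Fubini under `P ⊗ P̂`.
-/

open MeasureTheory ProbabilityTheory Set Filter Topology
open scoped ENNReal

noncomputable def firstPassage (Λ : ℝ → ℝ) (e : ℝ) : ℝ := sInf {t | 0 < t ∧ e ≤ Λ t}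

/-- `firstPassage` with the infimum taken over the rationals, which makes it jointly measurable. -/
noncomputable def ratFirstPassage (Λ : ℝ → ℝ) (e : ℝ) : ℝ :=
  (⨅ q : ℚ, if e ≤ Λ q then ENNReal.ofReal q else ∞).toReal

structure IsCumulativeHazard (Λ : ℝ → ℝ) : Prop where
  monotone : Monotone Λ
  continuous : Continuous Λ
  map_zero : Λ 0 = 0
  exists_le : ∀ x, ∃ t, x ≤ Λ t

namespace IsCumulativeHazard

variable {Λ : ℝ → ℝ} {e : ℝ}

lemma pos_of_le (hΛ : IsCumulativeHazard Λ) (he : 0 < e) {t : ℝ} (ht : e ≤ Λ t) : 0 < t := by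
  by_contra! h
  linarith [hΛ.monotone h, hΛ.map_zero]

lemma firstPassage_eq_sInf (hΛ : IsCumulativeHazard Λ) (he : 0 < e) :
    firstPassage Λ e = sInf {t | e ≤ Λ t} := by
  show sInf _ = sInf _
  congr 1
  ext t
  exact ⟨And.right, fun ht => ⟨hΛ.pos_of_le he ht, ht⟩⟩

lemma le_apply_firstPassage (hΛ : IsCumulativeHazard Λ) (he : 0 < e) :
    e ≤ Λ (firstPassage Λ e) := by
  rw [hΛ.firstPassage_eq_sInf he]
  exact (isClosed_le continuous_const hΛ.continuous).csInf_mem (hΛ.exists_le e)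
    ⟨0, fun t ht => (hΛ.pos_of_le he ht).le⟩

lemma firstPassage_le_iff (hΛ : IsCumulativeHazard Λ) (he : 0 < e) (a : ℝ) :
    firstPassage Λ e ≤ a ↔ e ≤ Λ a := by
  refine ⟨fun h => (hΛ.le_apply_firstPassage he).trans (hΛ.monotone h), fun h => ?_⟩
  rw [hΛ.firstPassage_eq_sInf he]
  exact csInf_le ⟨0, fun t ht => (hΛ.pos_of_le he ht).le⟩ h

lemma firstPassage_pos (hΛ : IsCumulativeHazard Λ) (he : 0 < e) : 0 < firstPassage Λ e :=
  hΛ.pos_of_le he (hΛ.le_apply_firstPassage he)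

lemma apply_firstPassage (hΛ : IsCumulativeHazard Λ) (he : 0 < e) :
    Λ (firstPassage Λ e) = e := by
  obtain ⟨T, hT⟩ := hΛ.exists_le e
  obtain ⟨c, rfl⟩ := intermediate_value_univ 0 T hΛ.continuous
    ⟨by rw [hΛ.map_zero]; exact he.le, hT⟩
  exact le_antisymm (hΛ.monotone ((hΛ.firstPassage_le_iff he c).2 le_rfl))
    (hΛ.le_apply_firstPassage he)

lemma ratFirstPassage_eq (hΛ : IsCumulativeHazard Λ) (he : 0 < e) :
    ratFirstPassage Λ e = firstPassage Λ e := by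
  set φ := firstPassage Λ e
  suffices h : (⨅ q : ℚ, if e ≤ Λ q then ENNReal.ofReal q else ∞) = ENNReal.ofReal φ by
    rw [ratFirstPassage, h, ENNReal.toReal_ofReal (hΛ.firstPassage_pos he).le]
  refine le_antisymm (ENNReal.le_of_forall_pos_le_add fun ε hε _ => ?_) (le_iInf fun q => ?_)
  · obtain ⟨q, hφq, hqε⟩ := exists_rat_btwn (lt_add_of_pos_right φ (NNReal.coe_pos.2 hε))
    calc (⨅ q : ℚ, if e ≤ Λ q then ENNReal.ofReal q else ∞)
        ≤ ENNReal.ofReal q := by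
          refine (iInf_le _ q).trans ?_
          rw [if_pos ((hΛ.firstPassage_le_iff he q).1 hφq.le)]
      _ ≤ ENNReal.ofReal (φ + ε) := ENNReal.ofReal_le_ofReal hqε.le
      _ ≤ ENNReal.ofReal φ + ε := by simpa using ENNReal.ofReal_add_le (p := φ) (q := ε)
  · split_ifs with h
    · exact ENNReal.ofReal_le_ofReal ((hΛ.firstPassage_le_iff he q).2 h)
    · exact le_top

end IsCumulativeHazard

lemma measurable_ratFirstPassage {α : Type*} [MeasurableSpace α] {Λ : α → ℝ → ℝ}
    (hΛ : Measurable fun x : α × ℝ => Λ x.1 x.2) :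
    Measurable fun x : α × ℝ => ratFirstPassage (Λ x.1) x.2 :=
  ENNReal.measurable_toReal.comp <| Measurable.iInf fun _ =>
    Measurable.ite
      (measurableSet_le measurable_snd (hΛ.comp (measurable_fst.prodMk measurable_const)))
      measurable_const measurable_const

noncomputable def cumHazard (f : ℝ → ℝ) (t : ℝ) : ℝ := ∫ s in Ioc 0 t, f s

lemma cumHazard_eq_intervalIntegral (f : ℝ → ℝ) (t : ℝ) :
    cumHazard f t = ∫ s in 0..t, (Ioi 0).indicator f s := by
  rcases le_total 0 t with ht | ht
  · rw [intervalIntegral.integral_of_le ht, setIntegral_indicator measurableSet_Ioi,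
      Ioc_inter_Ioi, max_self, cumHazard]
  · rw [intervalIntegral.integral_of_ge ht, setIntegral_indicator measurableSet_Ioi,
      Ioc_inter_Ioi, max_eq_right ht, cumHazard, Ioc_self, Ioc_eq_empty (not_lt.2 ht)]
    simp

lemma measurable_cumHazard {α : Type*} [MeasurableSpace α] {f : α → ℝ → ℝ}
    (hf : Measurable fun x : α × ℝ => f x.1 x.2) :
    Measurable fun x : α × ℝ => cumHazard (f x.1) x.2 := by
  have hS : MeasurableSet {z : (α × ℝ) × ℝ | z.2 ∈ Ioc 0 z.1.2} :=
    (measurableSet_lt measurable_const measurable_snd).inter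
      (measurableSet_le measurable_snd measurable_fst.snd)
  have hF : StronglyMeasurable fun z : (α × ℝ) × ℝ => (Ioc 0 z.1.2).indicator (f z.1.1) z.2 :=
    ((hf.comp (measurable_fst.fst.prodMk measurable_snd)).indicator hS).stronglyMeasurable
  convert (hF.integral_prod_right' (ν := volume)).measurable using 2 with x
  exact (integral_indicator measurableSet_Ioc).symm

section CumHazard

variable {f : ℝ → ℝ} (hf : Measurable f) (hf_nonneg : ∀ s, 0 ≤ f s)
  (hf_fin : ∀ t, ∫⁻ s in Ioc 0 t, ENNReal.ofReal (f s) < ∞)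
include hf hf_nonneg hf_fin

lemma integrableOn_Ioc_of_lintegral_lt_top (t : ℝ) : IntegrableOn f (Ioc 0 t) :=
  ⟨hf.aestronglyMeasurable,
    (hasFiniteIntegral_iff_ofReal (ae_of_all _ fun s => hf_nonneg s)).2 (hf_fin t)⟩

lemma monotone_cumHazard : Monotone (cumHazard f) := fun _ b hab =>
  setIntegral_mono_set (integrableOn_Ioc_of_lintegral_lt_top hf hf_nonneg hf_fin b)
    (ae_of_all _ fun s => hf_nonneg s) (Ioc_subset_Ioc_right hab).eventuallyLE

lemma continuous_cumHazard : Continuous (cumHazard f) := by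
  have hint : ∀ a b, IntervalIntegrable ((Ioi 0).indicator f) volume a b := fun a b => by
    refine IntegrableOn.intervalIntegrable ?_
    rw [integrableOn_indicator_iff measurableSet_Ioi]
    refine (integrableOn_Ioc_of_lintegral_lt_top hf hf_nonneg hf_fin (max a b)).mono_set ?_
    rintro s ⟨hs0, hs⟩
    exact ⟨hs0, hs.2⟩
  simpa only [← cumHazard_eq_intervalIntegral] using intervalIntegral.continuous_primitive hint 0

lemma exists_le_cumHazard (hf_div : ∫⁻ s in Ioi 0, ENNReal.ofReal (f s) = ∞) (x : ℝ) :
    ∃ t, x ≤ cumHazard f t := by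
  by_contra! h
  have hle : ∫⁻ s in Ioi 0, ENNReal.ofReal (f s) ≤ ENNReal.ofReal x := by
    rw [← iUnion_Ioc_eq_Ioi_self_iff.2 fun y _ => exists_nat_ge y,
      setLIntegral_iUnion_of_directed _ (show Monotone fun n : ℕ => Ioc (0 : ℝ) n from
        fun i j hij => Ioc_subset_Ioc_right (Nat.cast_le.2 hij)).directed_le]
    refine iSup_le fun n => ?_
    rw [← ofReal_integral_eq_lintegral_ofReal (integrableOn_Ioc_of_lintegral_lt_top hf hf_nonneg
      hf_fin n) (ae_of_all _ fun s => hf_nonneg s)]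
    exact ENNReal.ofReal_le_ofReal (h n).le
  exact ENNReal.ofReal_ne_top (top_le_iff.1 (hf_div ▸ hle))

lemma isCumulativeHazard_cumHazard (hf_div : ∫⁻ s in Ioi 0, ENNReal.ofReal (f s) = ∞) :
    IsCumulativeHazard (cumHazard f) where
  monotone := monotone_cumHazard hf hf_nonneg hf_fin
  continuous := continuous_cumHazard hf hf_nonneg hf_fin
  map_zero := by simp [cumHazard]
  exists_le := exists_le_cumHazard hf hf_nonneg hf_fin hf_div

end CumHazard

lemma ae_isCumulativeHazard {Ω : Type*} [MeasurableSpace Ω] {P : Measure Ω} {lam : ℝ → Ω → ℝ}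
    (hlam : Measurable fun q : ℝ × Ω => lam q.1 q.2) (hlam_nonneg : ∀ s ω, 0 ≤ lam s ω)
    (hlam_int : ∀ᵐ ω ∂P, (∀ t, ∫⁻ s in Ioc 0 t, ENNReal.ofReal (lam s ω) < ∞) ∧
      ∫⁻ s in Ioi 0, ENNReal.ofReal (lam s ω) = ∞) :
    ∀ᵐ ω ∂P, IsCumulativeHazard (cumHazard fun s => lam s ω) :=
  hlam_int.mono fun ω hω => isCumulativeHazard_cumHazard
    (hlam.comp (measurable_id.prodMk measurable_const)) (hlam_nonneg · ω) hω.1 hω.2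

lemma apply_toReal_sub_sum_ratFirstPassage {Λ : ℕ → ℝ → ℝ} {e : ℕ → ℝ} {n : ℕ}
    (h : ∀ k ∈ Finset.Icc 1 (n + 1), IsCumulativeHazard (Λ k) ∧ 0 < e k) {θ : ℝ≥0∞}
    (hθ : θ = ENNReal.ofReal (∑ k ∈ Finset.Icc 1 (n + 1), firstPassage (Λ k) (e k))) :
    Λ (n + 1) (θ.toReal - ∑ k ∈ Finset.Icc 1 n, ratFirstPassage (Λ k) (e k)) = e (n + 1) := by
  have hsub : Finset.Icc 1 n ⊆ Finset.Icc 1 (n + 1) := Finset.Icc_subset_Icc_right n.le_succ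
  have hlast := h (n + 1) (by simp)
  rw [hθ, ENNReal.toReal_ofReal (Finset.sum_nonneg fun k hk =>
      ((h k hk).1.firstPassage_pos (h k hk).2).le),
    Finset.sum_Icc_succ_top (by omega), Finset.sum_congr rfl fun k hk =>
      ((h k (hsub hk)).1.ratFirstPassage_eq (h k (hsub hk)).2).symm, add_sub_cancel_left,
    hlast.1.apply_firstPassage hlast.2]

section ExponentialTail

variable {Ω : Type*} [MeasurableSpace Ω] {μ : Measure Ω} [IsProbabilityMeasure μ] {Y : Ω → ℝ}
  (hY : Measurable Y) (hexp : ∀ x, 0 ≤ x → μ {ω | x < Y ω} = ENNReal.ofReal (Real.exp (-x)))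
include hY hexp

lemma ae_pos_of_exp_tail : ∀ᵐ ω ∂μ, 0 < Y ω := by
  have h : μ (Y ⁻¹' Ioi 0) = 1 := (hexp 0 le_rfl).trans (by simp)
  exact ae_iff.2 ((prob_compl_eq_zero_iff (hY measurableSet_Ioi)).2 h)

lemma measure_eq_zero_of_exp_tail (x : ℝ) : μ {ω | Y ω = x} = 0 := by
  rcases le_or_gt x 0 with hx | hx
  · exact measure_mono_null (fun ω (h : Y ω = x) => not_lt.2 (h.trans_le hx))
      (ae_iff.1 (ae_pos_of_exp_tail hY hexp))
  have hbound : ∀ t ∈ Ioo 0 x,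
      μ {ω | Y ω = x} + ENNReal.ofReal (Real.exp (-x)) ≤ ENNReal.ofReal (Real.exp (-t)) := by
    rintro t ⟨ht0, htx⟩
    have hdisj : Disjoint {ω | Y ω = x} {ω | x < Y ω} :=
      disjoint_left.2 fun ω (h : Y ω = x) (h' : x < Y ω) => h'.ne' h
    have hmeas : MeasurableSet {ω | x < Y ω} := hY measurableSet_Ioi
    calc μ {ω | Y ω = x} + ENNReal.ofReal (Real.exp (-x))
        = μ ({ω | Y ω = x} ∪ {ω | x < Y ω}) := by rw [measure_union hdisj hmeas, hexp x hx.le]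
      _ ≤ μ {ω | t < Y ω} := measure_mono (union_subset
          (fun ω (h : Y ω = x) => show t < Y ω by rw [h]; exact htx)
          fun ω (h : x < Y ω) => htx.trans h)
      _ = ENNReal.ofReal (Real.exp (-t)) := hexp t ht0.le
  have htend : Tendsto (fun t => ENNReal.ofReal (Real.exp (-t))) (𝓝[<] x)
      (𝓝 (ENNReal.ofReal (Real.exp (-x)))) :=
    ((ENNReal.continuous_ofReal.comp (by fun_prop)).tendsto x).mono_left nhdsWithin_le_nhds
  have := ge_of_tendsto htend (eventually_of_mem (Ioo_mem_nhdsLT hx) hbound)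
  simpa using ENNReal.le_sub_of_add_le_right ENNReal.ofReal_ne_top this

end ExponentialTail

lemma ProbabilityTheory.IndepFun.measure_eq_eq_zero {Ω : Type*} [MeasurableSpace Ω] {μ : Measure Ω}
    [IsFiniteMeasure μ] {X Y : Ω → ℝ} (h : IndepFun X Y μ) (hX : Measurable X)
    (hY : Measurable Y) (hY_atom : ∀ x, μ {ω | Y ω = x} = 0) : μ {ω | X ω = Y ω} = 0 := by
  have hdiag : MeasurableSet {q : ℝ × ℝ | q.1 = q.2} :=
    measurableSet_eq_fun measurable_fst measurable_snd
  rw [show {ω | X ω = Y ω} = (fun ω => (X ω, Y ω)) ⁻¹' {q | q.1 = q.2} from rfl,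
    ← Measure.map_apply (hX.prodMk hY) hdiag,
    (indepFun_iff_map_prod_eq_prod_map_map hX.aemeasurable hY.aemeasurable).1 h,
    Measure.prod_apply hdiag]
  simp [Measure.map_apply hY (measurableSet_singleton _), preimage, hY_atom]

lemma measure_prod_setOf_eq_eq_zero {α β : Type*} {m : MeasurableSpace β} [mα : MeasurableSpace α]
    [mβ : MeasurableSpace β] (hm : m ≤ mβ) (μ : Measure α) [SFinite μ] (ν : Measure β)
    [IsProbabilityMeasure ν] {Y : β → ℝ} (hY : Measurable Y)
    (hindep : Indep m (MeasurableSpace.comap Y inferInstance) ν)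
    (hY_atom : ∀ x, ν {b | Y b = x} = 0) {g : α × β → ℝ} (hg : Measurable[mα.prod m] g) :
    (μ.prod ν) {p | Y p.2 = g p} = 0 := by
  have hprod : mα.prod m ≤ mα.prod mβ := sup_le_sup_left (MeasurableSpace.comap_mono hm) _
  have hB : MeasurableSet {p : α × β | Y p.2 = g p} :=
    measurableSet_eq_fun (hY.comp measurable_snd) (hg.mono hprod le_rfl)
  rw [Measure.prod_apply hB]
  have hsection : ∀ a, ν {b | Y b = g (a, b)} = 0 := fun a => by
    have hga : Measurable[m] fun b => g (a, b) := hg.comp (@measurable_prodMk_left α β _ m a)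
    rw [show {b | Y b = g (a, b)} = {b | g (a, b) = Y b} from Set.ext fun _ => eq_comm]
    have hindep_a : IndepFun (fun b => g (a, b)) Y ν := by
      rw [IndepFun_iff_Indep]
      exact indep_of_indep_of_le_left hindep hga.comap_le
    exact hindep_a.measure_eq_eq_zero (hga.mono hm le_rfl) hY hY_atom
  simp [preimage, hsection]

section SigmaUpTo

variable {Ω : Type*} {E : ℕ → Ω → ℝ}

abbrev sigmaUpTo (E : ℕ → Ω → ℝ) (n : ℕ) : MeasurableSpace Ω :=
  ⨆ i ∈ Finset.Icc 1 n, MeasurableSpace.comap (E i) inferInstance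

lemma measurable_sigmaUpTo {k n : ℕ} (hk : k ∈ Finset.Icc 1 n) : Measurable[sigmaUpTo E n] (E k) :=
  Measurable.of_comap_le (le_iSup₂ (f := fun i _ => MeasurableSpace.comap (E i) _) k hk)

lemma sigmaUpTo_le [m : MeasurableSpace Ω] (hE : ∀ i, Measurable (E i)) (n : ℕ) :
    sigmaUpTo E n ≤ m :=
  iSup₂_le fun i _ => (hE i).comap_le

lemma comap_fst_sup_iSup_comap_snd {α : Type*} (mα : MeasurableSpace α) (n : ℕ) :
    (MeasurableSpace.comap Prod.fst mα ⊔ ⨆ i ∈ Finset.Icc 1 n,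
      MeasurableSpace.comap (fun p : α × Ω => E i p.2) inferInstance) =
      mα.prod (sigmaUpTo E n) := by
  simp only [MeasurableSpace.prod, sigmaUpTo, MeasurableSpace.comap_iSup,
    MeasurableSpace.comap_comp]
  rfl

lemma ProbabilityTheory.iIndepFun.indep_sigmaUpTo [MeasurableSpace Ω] {μ : Measure Ω} {N : ℕ}
    (hE : ∀ i, Measurable (E i)) (h : iIndepFun (fun i : Fin N => E (i + 1)) μ) {n : ℕ}
    (hn : n < N) : Indep (sigmaUpTo E n) (MeasurableSpace.comap (E (n + 1)) inferInstance) μ := by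
  let m : Fin N → MeasurableSpace Ω := fun j => MeasurableSpace.comap (E (j + 1)) inferInstance
  have hdisj : Disjoint {j : Fin N | (j : ℕ) < n} {⟨n, hn⟩} := by simp
  refine indep_of_indep_of_le_right (indep_of_indep_of_le_left
    (indep_iSup_of_disjoint (fun j => (hE _).comap_le) h.iIndep hdisj) ?_)
    (le_iSup₂ (f := fun j _ => m j) ⟨n, hn⟩ rfl)
  refine iSup₂_le fun i hi => ?_
  obtain ⟨hi1, hin⟩ := Finset.mem_Icc.1 hi
  obtain ⟨j, rfl⟩ : ∃ j, i = j + 1 := ⟨i - 1, by omega⟩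
  exact le_iSup₂ (f := fun j _ => m j) ⟨j, by omega⟩ (show j < n by omega)

end SigmaUpTo

theorem stmt_6_general
    {Ω Ω' : Type*} [mΩ : MeasurableSpace Ω] [mΩ' : MeasurableSpace Ω']
    (P : Measure Ω) (Phat : Measure Ω')
    [IsProbabilityMeasure P] [IsProbabilityMeasure Phat]
    (N : ℕ)
    (E : ℕ → Ω' → ℝ) (hE_meas : ∀ n, Measurable (E n))
    (hE_indep : iIndepFun
      (fun i : Fin N => E ((i : ℕ) + 1)) Phat)
    (hE_exp : ∀ n : ℕ, 1 ≤ n → n ≤ N → ∀ x : ℝ, 0 ≤ x →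
      Phat {ω | x < E n ω} = ENNReal.ofReal (Real.exp (-x)))
    (lam : ℕ → ℝ → Ω → ℝ)
    (hlam_meas : ∀ n, Measurable fun q : ℝ × Ω => lam n q.1 q.2)
    (hlam_nonneg : ∀ n s ω, 0 ≤ lam n s ω)
    (hlam_int : ∀ n : ℕ, 1 ≤ n → n ≤ N → ∀ᵐ ω ∂P,
      (∀ t : ℝ, ∫⁻ s in Set.Ioc (0:ℝ) t, ENNReal.ofReal (lam n s ω) < ⊤) ∧
      (∫⁻ s in Set.Ioi (0:ℝ), ENNReal.ofReal (lam n s ω) = ⊤))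
    (τ' : ℕ → Ω × Ω' → ℝ)
    (hτ' : ∀ n p, τ' n p
      = sInf {t : ℝ | 0 < t ∧ E n p.2 ≤ ∫ s in Set.Ioc (0:ℝ) t, lam n s p.1})
    (τ : ℕ → Ω × Ω' → ℝ)
    (hτ : ∀ n p, τ n p = ∑ k ∈ Finset.Icc 1 n, τ' k p) :
    ∀ n : ℕ, n < N → ∀ Θ : Ω × Ω' → ENNReal,
      Measurable[MeasurableSpace.comap Prod.fst mΩ ⊔
          ⨆ i ∈ Finset.Icc 1 n,
            MeasurableSpace.comap (fun p : Ω × Ω' => E i p.2) inferInstance] Θ →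
      (P.prod Phat) {p | Θ p = ENNReal.ofReal (τ (n + 1) p)} = 0 := by
  intro n hn Θ hΘ
  let Λ : ℕ → Ω → ℝ → ℝ := fun k ω => cumHazard fun s => lam k s ω
  have hΛ : ∀ k, Measurable fun x : Ω × ℝ => Λ k x.1 x.2 := fun k =>
    measurable_cumHazard (f := fun ω s => lam k s ω) ((hlam_meas k).comp measurable_swap)
  let g : Ω × Ω' → ℝ := fun p => Λ (n + 1) p.1
    ((Θ p).toReal - ∑ k ∈ Finset.Icc 1 n, ratFirstPassage (Λ k p.1) (E k p.2))
  have hg : Measurable[mΩ.prod (sigmaUpTo E n)] g := by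
    rw [comap_fst_sup_iSup_comap_snd] at hΘ
    have hfst := @measurable_fst Ω Ω' mΩ (sigmaUpTo E n)
    have hsnd := @measurable_snd Ω Ω' mΩ (sigmaUpTo E n)
    refine (hΛ (n + 1)).comp (hfst.prodMk ((ENNReal.measurable_toReal.comp hΘ).sub
      (Finset.measurable_sum _ fun k hk => (measurable_ratFirstPassage (hΛ k)).comp
        (hfst.prodMk ((measurable_sigmaUpTo hk).comp hsnd)))))
  have hgood : ∀ᵐ p ∂P.prod Phat,
      ∀ k ∈ Finset.Icc 1 (n + 1), IsCumulativeHazard (Λ k p.1) ∧ 0 < E k p.2 := by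
    have hk : ∀ k ∈ Finset.Icc 1 (n + 1), 1 ≤ k ∧ k ≤ N := fun k hk => by
      simp only [Finset.mem_Icc] at hk; omega
    have hhazard : ∀ᵐ ω ∂P, ∀ k ∈ Finset.Icc 1 (n + 1), IsCumulativeHazard (Λ k ω) :=
      (eventually_all_finset _).2 fun k hk' => ae_isCumulativeHazard (hlam_meas k)
        (hlam_nonneg k) (hlam_int k (hk k hk').1 (hk k hk').2)
    have hpos : ∀ᵐ ω' ∂Phat, ∀ k ∈ Finset.Icc 1 (n + 1), 0 < E k ω' :=
      (eventually_all_finset _).2 fun k hk' =>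
        ae_pos_of_exp_tail (hE_meas k) (hE_exp k (hk k hk').1 (hk k hk').2)
    filter_upwards [Measure.quasiMeasurePreserving_fst.ae hhazard,
      Measure.quasiMeasurePreserving_snd.ae hpos] with p hp₁ hp₂ k hk
    exact ⟨hp₁ k hk, hp₂ k hk⟩
  have hnull : (P.prod Phat) {p | E (n + 1) p.2 = g p} = 0 :=
    measure_prod_setOf_eq_eq_zero (sigmaUpTo_le hE_meas n) P Phat (hE_meas (n + 1))
      (hE_indep.indep_sigmaUpTo hE_meas hn)
      (measure_eq_zero_of_exp_tail (hE_meas _) (hE_exp _ (by omega) hn)) hg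
  refine measure_mono_null_ae (hgood.mono fun p hp (hΘp : Θ p = _) => ?_) hnull
  rw [hτ, Finset.sum_congr rfl fun k _ => hτ' k p] at hΘp
  exact (apply_toReal_sub_sum_ratFirstPassage hp hΘp).symm

/-- in the multiple-default Cox model, `τ_{n+1}` avoids every
`[0,∞]`-valued random time `Θ` that is measurable with respect to
`𝓕_∞ ∨ σ(E_1) ∨ … ∨ σ(E_n)`: `P̃(τ_{n+1} = Θ) = 0`.
`Ω'` plays the role of `Ω̂`, `Phat` of `P̂`, `lam n` of `λ̃ⁿ`, `τ'` of `τ̃`. -/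
theorem stmt_6
    {Ω Ω' : Type*} [mΩ : MeasurableSpace Ω] [mΩ' : MeasurableSpace Ω']
    (P : Measure Ω) (Phat : Measure Ω')
    [IsProbabilityMeasure P] [IsProbabilityMeasure Phat]
    (F : Filtration ℝ mΩ) (hF : (⨆ t : ℝ, (F t : MeasurableSpace Ω)) = mΩ)
    (N : ℕ) (hN : 1 ≤ N)
    (E : ℕ → Ω' → ℝ) (hE_meas : ∀ n, Measurable (E n))
    (hE_indep : iIndepFun
      (fun i : Fin N => E ((i : ℕ) + 1)) Phat)
    (hE_exp : ∀ n : ℕ, 1 ≤ n → n ≤ N → ∀ x : ℝ, 0 ≤ x →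
      Phat {ω | x < E n ω} = ENNReal.ofReal (Real.exp (-x)))
    (lam : ℕ → ℝ → Ω → ℝ)
    (hlam_meas : ∀ n, Measurable fun q : ℝ × Ω => lam n q.1 q.2)
    (hlam_nonneg : ∀ n s ω, 0 ≤ lam n s ω)
    (hlam_adapted : ∀ n t, Measurable[F t] fun ω => lam n t ω)
    (hlam_int : ∀ n : ℕ, 1 ≤ n → n ≤ N → ∀ᵐ ω ∂P,
      (∀ t : ℝ, ∫⁻ s in Set.Ioc (0:ℝ) t, ENNReal.ofReal (lam n s ω) < ⊤) ∧
      (∫⁻ s in Set.Ioi (0:ℝ), ENNReal.ofReal (lam n s ω) = ⊤))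
    (τ' : ℕ → Ω × Ω' → ℝ)
    (hτ' : ∀ n p, τ' n p
      = sInf {t : ℝ | 0 < t ∧ E n p.2 ≤ ∫ s in Set.Ioc (0:ℝ) t, lam n s p.1})
    (τ : ℕ → Ω × Ω' → ℝ)
    (hτ : ∀ n p, τ n p = ∑ k ∈ Finset.Icc 1 n, τ' k p) :
    ∀ n : ℕ, n < N → ∀ Θ : Ω × Ω' → ENNReal,
      Measurable[MeasurableSpace.comap Prod.fst mΩ ⊔
          ⨆ i ∈ Finset.Icc 1 n,
            MeasurableSpace.comap (fun p : Ω × Ω' => E i p.2) inferInstance] Θ →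
      (P.prod Phat) {p | Θ p = ENNReal.ofReal (τ (n + 1) p)} = 0 :=
  stmt_6_general (mΩ := mΩ) (mΩ' := mΩ') P Phat N E hE_meas hE_indep hE_exp lam hlam_meas
    hlam_nonneg hlam_int τ' hτ' τ hτ
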